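/- arXiv:2407.11702 — 6 statements merged into one kernel-verified Lean document; each statement's English description precedes it below -/
import Mathlib

section
/- Let d1, c, β, ε > 0 with ε < c/d1, and let φ : [0,∞) → ℝ be a bounded C² function with φ'(x) > 0 for all x ≥ 0, satisfying the differential inequality φ''(x) - ε φ'(x) + f(x) > 0 for all x > 0, where f : [0,∞) → ℝ satisfies 0 ≤ f(x) ≤ C e^{-βx} for some constant C > 0. Then there exists a constant C' > 0 such that φ'(x) ≤ C' e^{-βx} for all x > 0. -/
/-!
Multiplying by the integrating factor `e^{-εx}`, the inequality `φ'' - ε φ' > -C e^{-βx}` says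
that `h(x) = φ'(x) e^{-εx} - K e^{-(β+ε)x}`, with `K = C / (β + ε)`, is nondecreasing. If
`φ'(x) > K e^{-βx}` at some `x > 0`, then `h(x) > 0`, so `φ' ≥ h(x) e^{εt} ≥ h(x)` on `[x, ∞)`,
and `φ` would grow at least linearly, contradicting its boundedness.
-/

open Real Set

theorem exp_neg_add_mul (a b t : ℝ) : exp (-(a + b) * t) = exp (-a * t) * exp (-b * t) := by
  rw [← exp_add]; ring_nf

theorem not_bddAbove_image_Ici_of_le_hasDerivAt {f f' : ℝ → ℝ} {a δ : ℝ} (hδ : 0 < δ)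
    (hf : ∀ t, a ≤ t → HasDerivAt f (f' t) t) (hf' : ∀ t, a ≤ t → δ ≤ f' t) :
    ¬ BddAbove (f '' Ici a) := by
  rintro ⟨B, hB⟩
  have hmono : MonotoneOn (fun t => f t - δ * t) (Ici a) := by
    refine monotoneOn_of_hasDerivWithinAt_nonneg (convex_Ici a)
      (fun t ht => ((hf t ht).continuousAt.sub (continuousAt_const.mul continuousAt_id))
        |>.continuousWithinAt)
      (fun t ht => ((hf t (interior_subset ht)).sub
        ((hasDerivAt_id t).const_mul δ)).hasDerivWithinAt) fun t ht => ?_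
    simpa using hf' t (interior_subset ht)
  have hfa : f a ≤ B := hB ⟨a, self_mem_Ici, rfl⟩
  set t := a + (B - f a + 1) / δ
  have hat : a ≤ t := le_add_of_nonneg_right (by positivity)
  have hgrowth := hmono self_mem_Ici hat hat
  have hft : f t ≤ B := hB ⟨t, hat, rfl⟩
  have hδt : δ * t = δ * a + (B - f a + 1) := by
    simp only [t]; field_simp
  simp only at hgrowth
  linarith

theorem monotoneOn_mul_exp_sub_of_neg_exp_le {u u' : ℝ → ℝ} {D : Set ℝ} (hD : Convex ℝ D)
    {ε β C : ℝ} (hβε : β + ε ≠ 0) (hu : ∀ t ∈ D, HasDerivAt u (u' t) t)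
    (hineq : ∀ t ∈ D, -(C * exp (-β * t)) ≤ u' t - ε * u t) :
    MonotoneOn (fun t => u t * exp (-ε * t) - C / (β + ε) * exp (-(β + ε) * t)) D := by
  have hderiv : ∀ t ∈ D, HasDerivAt
      (fun t => u t * exp (-ε * t) - C / (β + ε) * exp (-(β + ε) * t))
      ((u' t - ε * u t + C * exp (-β * t)) * exp (-ε * t)) t := by
    intro t ht
    have hexp : ∀ k : ℝ, HasDerivAt (fun s => exp (k * s)) (exp (k * t) * k) t := fun k => by
      simpa using ((hasDerivAt_id t).const_mul k).exp
    refine (((hu t ht).mul (hexp (-ε))).sub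
      ((hexp (-(β + ε))).const_mul (C / (β + ε)))).congr_deriv ?_
    rw [exp_neg_add_mul]
    field_simp
    ring
  refine monotoneOn_of_hasDerivWithinAt_nonneg hD
    (fun t ht => (hderiv t ht).continuousAt.continuousWithinAt)
    (fun t ht => (hderiv t (interior_subset ht)).hasDerivWithinAt) fun t ht => ?_
  have := hineq t (interior_subset ht)
  exact mul_nonneg (by linarith) (exp_pos _).le

theorem stmt0_general (β ε C : ℝ) (φ φ' φ'' f : ℝ → ℝ)
    (hβ : 0 < β) (hε : 0 < ε)
    (hC : 0 < C)
    (hφd : ∀ x, 0 ≤ x → HasDerivAt φ (φ' x) x)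
    (hφd2 : ∀ x, 0 ≤ x → HasDerivAt φ' (φ'' x) x)
    (hbdd : ∃ B, ∀ x, 0 ≤ x → |φ x| ≤ B)
    (hineq : ∀ x, 0 < x → 0 < φ'' x - ε * φ' x + f x)
    (hf : ∀ x, 0 ≤ x → 0 ≤ f x ∧ f x ≤ C * Real.exp (-β * x)) :
    ∃ C' > 0, ∀ x, 0 < x → φ' x ≤ C' * Real.exp (-β * x) := by
  have hβε : 0 < β + ε := by linarith
  set K := C / (β + ε)
  have hK : 0 < K := div_pos hC hβε
  refine ⟨K, hK, fun x hx => ?_⟩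
  have hmono := monotoneOn_mul_exp_sub_of_neg_exp_le (C := C) (convex_Ioi 0) hβε.ne'
    (fun t ht => hφd2 t ht.le)
    (fun t ht => by linarith [hineq t ht, (hf t ht.le).2])
  by_contra! hgt
  set δ := φ' x * exp (-ε * x) - K * exp (-(β + ε) * x)
  have hδ : 0 < δ := by
    simp only [δ, exp_neg_add_mul]
    nlinarith [exp_pos (-ε * x)]
  have hlow : ∀ t, x ≤ t → δ ≤ φ' t := fun t hxt => by
    have hδt : δ ≤ φ' t * exp (-ε * t) - K * exp (-(β + ε) * t) :=
      hmono hx (hx.trans_le hxt) hxt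
    have hKt : 0 < K * exp (-(β + ε) * t) := by positivity
    have hgrow : 1 ≤ exp (ε * t) := one_le_exp (by nlinarith)
    have hcancel : φ' t * exp (-ε * t) * exp (ε * t) = φ' t := by
      rw [mul_assoc, ← exp_add]; simp
    nlinarith
  obtain ⟨B, hB⟩ := hbdd
  refine not_bddAbove_image_Ici_of_le_hasDerivAt hδ (fun t ht => hφd t (hx.le.trans ht)) hlow
    ⟨B, ?_⟩
  rintro _ ⟨t, ht, rfl⟩
  exact (le_abs_self _).trans (hB t (hx.le.trans ht))

/-- If `φ` is a bounded C² function on `[0,∞)` with `φ' > 0`, satisfying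
`φ'' - ε φ' + f > 0` on `(0,∞)` with `0 ≤ f(x) ≤ C e^{-βx}` and `0 < ε < c/d1`,
then `φ'(x) = O(e^{-βx})`. -/
theorem stmt0 (d1 c β ε C : ℝ) (φ φ' φ'' f : ℝ → ℝ)
    (hd1 : 0 < d1) (hc : 0 < c) (hβ : 0 < β) (hε : 0 < ε) (hεc : ε < c / d1)
    (hC : 0 < C)
    (hφd : ∀ x, 0 ≤ x → HasDerivAt φ (φ' x) x)
    (hφd2 : ∀ x, 0 ≤ x → HasDerivAt φ' (φ'' x) x)
    (hbdd : ∃ B, ∀ x, 0 ≤ x → |φ x| ≤ B)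
    (hpos : ∀ x, 0 ≤ x → 0 < φ' x)
    (hineq : ∀ x, 0 < x → 0 < φ'' x - ε * φ' x + f x)
    (hf : ∀ x, 0 ≤ x → 0 ≤ f x ∧ f x ≤ C * Real.exp (-β * x)) :
    ∃ C' > 0, ∀ x, 0 < x → φ' x ≤ C' * Real.exp (-β * x) :=
  stmt0_general β ε C φ φ' φ'' f hβ hε hC hφd hφd2 hbdd hineq hf
end

section
/- Let φ : [0,∞) → ℝ be a bounded, strictly increasing C² solution of d1 φ'' - c φ' + f(x) = 0 on (0,∞) with d1, c > 0, where f(x) = O(e^{-βx}) for some β > 0 and f ≥ 0. If additionally u* - φ(x) = O(e^{-βx}) for the limit u* = lim_{x→∞} φ(x), then u* - φ(x) + φ'(x) = O(e^{-αx}) for some α > 0 depending only on d1, c, β. -/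
/-!
The function `k = d1 φ' - c φ - (C/β) e^{-βt}` satisfies `k' = C e^{-βt} - f ≥ 0`, so it is
nondecreasing. By the mean value theorem some `y ∈ (x, x + 1)` has
`φ'(y) = φ(x + 1) - φ(x) ≤ u* - φ(x) = O(e^{-βx})`, and `k x ≤ k y` together with
`φ x ≤ φ y` transfers this bound to `φ'(x)`.
-/

open Set Filter Topology Real

theorem MonotoneOn.ge_of_tendsto {α β : Type*} [TopologicalSpace α] [Preorder α]
    [OrderClosedTopology α] [Preorder β] [IsDirectedOrder β] {f : β → α} {a : α} {b : β}
    (hf : MonotoneOn f (Ici b)) (ha : Tendsto f atTop (𝓝 a)) {x : β} (hx : b ≤ x) :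
    f x ≤ a := by
  have : Nonempty β := ⟨x⟩
  refine _root_.ge_of_tendsto ha ?_
  filter_upwards [eventually_ge_atTop x] with y hy
  exact hf hx (hx.trans hy) hy

theorem exists_mem_Ioo_hasDerivAt_le_sub {φ φ' : ℝ → ℝ} {x L : ℝ}
    (hφd : ∀ t ∈ Icc x (x + 1), HasDerivAt φ (φ' t) t) (hle : φ (x + 1) ≤ L) :
    ∃ y ∈ Ioo x (x + 1), φ' y ≤ L - φ x := by
  obtain ⟨y, hy, hslope⟩ := exists_hasDerivAt_eq_slope φ φ' (lt_add_one x)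
    (fun t ht => (hφd t ht).continuousAt.continuousWithinAt)
    (fun t ht => hφd t (Ioo_subset_Icc_self ht))
  refine ⟨y, hy, ?_⟩
  rw [hslope, add_sub_cancel_left, div_one]
  linarith

theorem monotoneOn_comparison_of_source_le_exp {d1 c β C : ℝ} {φ φ' φ'' f : ℝ → ℝ}
    (hβ : β ≠ 0) (hφd : ∀ x, 0 ≤ x → HasDerivAt φ (φ' x) x)
    (hφd2 : ∀ x, 0 ≤ x → HasDerivAt φ' (φ'' x) x)
    (hode : ∀ x, 0 < x → d1 * φ'' x - c * φ' x + f x = 0)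
    (hfC : ∀ x, 0 < x → f x ≤ C * exp (-β * x)) :
    MonotoneOn (fun t => d1 * φ' t - c * φ t - C / β * exp (-β * t)) (Ici 0) := by
  have hk : ∀ t, 0 ≤ t → HasDerivAt (fun t => d1 * φ' t - c * φ t - C / β * exp (-β * t))
      (d1 * φ'' t - c * φ' t + C * exp (-β * t)) t := by
    intro t ht
    have hexp : HasDerivAt (fun s => exp (-β * s)) (exp (-β * t) * -β) t := by
      simpa using ((hasDerivAt_id t).const_mul (-β)).exp
    refine ((((hφd2 t ht).const_mul d1).sub ((hφd t ht).const_mul c)).sub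
      (hexp.const_mul (C / β))).congr_deriv ?_
    field_simp
    ring
  refine monotoneOn_of_hasDerivWithinAt_nonneg (convex_Ici 0)
    (f' := fun t => d1 * φ'' t - c * φ' t + C * exp (-β * t))
    (fun t ht => (hk t ht).continuousAt.continuousWithinAt) (fun t ht => ?_) (fun t ht => ?_)
  all_goals rw [interior_Ici] at ht
  · exact (hk t ht.le).hasDerivWithinAt
  · linarith [hode t ht, hfC t ht]

theorem stmt1_general (d1 c β ustar : ℝ) (φ φ' φ'' f : ℝ → ℝ)
    (hd1 : 0 < d1) (hc : 0 < c) (hβ : 0 < β)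
    (hφd : ∀ x, 0 ≤ x → HasDerivAt φ (φ' x) x)
    (hφd2 : ∀ x, 0 ≤ x → HasDerivAt φ' (φ'' x) x)
    (hmono : StrictMonoOn φ (Set.Ici 0))
    (hode : ∀ x, 0 < x → d1 * φ'' x - c * φ' x + f x = 0)
    (hf : ∃ C > 0, ∀ x, 0 ≤ x → 0 ≤ f x ∧ f x ≤ C * Real.exp (-β * x))
    (hlim : Filter.Tendsto φ Filter.atTop (nhds ustar))
    (hconv : ∃ C > 0, ∀ x, 0 ≤ x → ustar - φ x ≤ C * Real.exp (-β * x)) :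
    ∃ α > 0, ∃ C' > 0, ∀ x, 0 ≤ x →
      ustar - φ x + φ' x ≤ C' * Real.exp (-α * x) := by
  obtain ⟨C, hC, hfC⟩ := hf
  obtain ⟨C₂, hC₂, hconvC⟩ := hconv
  have hk := monotoneOn_comparison_of_source_le_exp hβ.ne' hφd hφd2 hode
    fun x hx => (hfC x hx.le).2
  refine ⟨β, hβ, 2 * C₂ + C / (β * d1), by positivity, fun x hx => ?_⟩
  have hφ_le : φ (x + 1) ≤ ustar := hmono.monotoneOn.ge_of_tendsto hlim (by linarith)
  obtain ⟨y, ⟨hxy, -⟩, hφ'y⟩ :=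
    exists_mem_Ioo_hasDerivAt_le_sub (fun t ht => hφd t (hx.trans ht.1)) hφ_le
  have hkxy := hk hx (hx.trans hxy.le) hxy.le
  have hφxy := hmono.monotoneOn hx (hx.trans hxy.le) hxy.le
  have hdist := hconvC x hx
  have hderiv : d1 * φ' x ≤ d1 * ((C₂ + C / (β * d1)) * exp (-β * x)) :=
    calc d1 * φ' x ≤ d1 * φ' y + C / β * exp (-β * x) := by
          have : 0 ≤ C / β * exp (-β * y) := by positivity
          dsimp only at hkxy
          linarith [mul_le_mul_of_nonneg_left hφxy hc.le]
      _ ≤ d1 * (C₂ * exp (-β * x)) + C / β * exp (-β * x) := by gcongr; linarith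
      _ = d1 * ((C₂ + C / (β * d1)) * exp (-β * x)) := by field_simp
  linarith [le_of_mul_le_mul_left hderiv hd1]

/-- Exponential decay of `u* - φ` and `φ'` for a bounded, strictly increasing solution of
`d1 φ'' - c φ' + f = 0` with exponentially decaying source. -/
theorem stmt1 (d1 c β ustar : ℝ) (φ φ' φ'' f : ℝ → ℝ)
    (hd1 : 0 < d1) (hc : 0 < c) (hβ : 0 < β)
    (hφd : ∀ x, 0 ≤ x → HasDerivAt φ (φ' x) x)
    (hφd2 : ∀ x, 0 ≤ x → HasDerivAt φ' (φ'' x) x)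
    (hmono : StrictMonoOn φ (Set.Ici 0))
    (hbdd : ∃ B, ∀ x, 0 ≤ x → |φ x| ≤ B)
    (hode : ∀ x, 0 < x → d1 * φ'' x - c * φ' x + f x = 0)
    (hf : ∃ C > 0, ∀ x, 0 ≤ x → 0 ≤ f x ∧ f x ≤ C * Real.exp (-β * x))
    (hlim : Filter.Tendsto φ Filter.atTop (nhds ustar))
    (hconv : ∃ C > 0, ∀ x, 0 ≤ x → ustar - φ x ≤ C * Real.exp (-β * x)) :
    ∃ α > 0, ∃ C' > 0, ∀ x, 0 ≤ x →
      ustar - φ x + φ' x ≤ C' * Real.exp (-α * x) :=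
  stmt1_general d1 c β ustar φ φ' φ'' f hd1 hc hβ hφd hφd2 hmono hode hf hlim hconv
end

section
/- For the 1-d heat kernel G(t,x) = (4πdt)^{−1/2} e^{−x²/(4dt)} with d > 0, and the image-series Green function G̃(t,x;τ,ξ) = Σ_{n∈ℤ} (−1)ⁿ G(t−τ, x−ξ−2nL) on the interval (−L, L), for every ε1 ∈ (0,1) there exists T0 ≥ 1 such that for all L ≥ T0 one has ∫_{−L}^{L} G̃(t,x;τ,ξ) dξ ≥ 1 − (4/√π) e^{−L/(2√d)} for all 0 < t−τ ≤ ε1² L/(4√d) and |x| ≤ (1−ε1) L. -/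
/-!
After the substitution `y = ξ + 2nL` the integrand is a translate of the Gaussian density with
mean `x` and variance `2d(t - τ)`, and the translates of `(-L, L]` by `2nL` tile the line. So the
image series integrates to `∑ (-1)ⁿ aₙ` with `aₙ ≥ 0` and `∑ aₙ = 1`, where `a₀` is the Gaussian
mass of `(-L, L]`; hence it is at least `2 a₀ - 1`. As `|x| ≤ (1 - ε₁) L`, the complement of
`(-L, L]` lies at distance at least `ε₁ L` from the mean, and the sub-Gaussian Chernoff bound gives
`1 - a₀ ≤ 2 exp (-(ε₁ L)² / (4 d (t - τ))) ≤ 2 exp (-L / √d)`. Once `L ≥ 2 √d`, one factor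
`exp (-L / (2 √d)) ≤ e⁻¹ ≤ 1 / √π` is absorbed into the constant.
-/

/-- The one-dimensional heat kernel with diffusion coefficient `d`. -/
noncomputable def heatKernel (d t x : ℝ) : ℝ :=
  (Real.sqrt (4 * Real.pi * d * t))⁻¹ * Real.exp (-x ^ 2 / (4 * d * t))

open MeasureTheory ProbabilityTheory Real Set
open scoped NNReal

theorem MeasureTheory.Integrable.hasSum_intervalIntegral_comp_add_mul {E : Type*}
    [NormedAddCommGroup E] [NormedSpace ℝ E] {f : ℝ → E} (hf : Integrable f) {p : ℝ}
    (hp : 0 < p) (a : ℝ) :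
    HasSum (fun n : ℤ ↦ ∫ x in a..a + p, f (x + n * p)) (∫ x, f x) := by
  have hcell : ∀ n : ℤ, ∫ x in a..a + p, f (x + n * p)
      = ∫ x in Ioc (a + n • p) (a + (n + 1) • p), f x := by
    intro n
    rw [intervalIntegral.integral_comp_add_right, intervalIntegral.integral_of_le (by linarith),
      zsmul_eq_mul, zsmul_eq_mul]
    push_cast
    ring_nf
  simp only [hcell]
  rw [← setIntegral_univ, ← iUnion_Ioc_add_zsmul hp a]
  exact hasSum_integral_iUnion (fun _ ↦ measurableSet_Ioc) (pairwise_disjoint_Ioc_add_zsmul a p)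
    hf.integrableOn

lemma two_mul_sub_tsum_le_tsum_neg_one_zpow_mul {a : ℤ → ℝ} (ha : 0 ≤ a) (hs : Summable a) :
    2 * a 0 - ∑' n, a n ≤ ∑' n, (-1) ^ n * a n := by
  have habs : ∀ n, |(-1 : ℝ) ^ n * a n| = a n := fun n ↦ by
    rw [abs_mul, abs_neg_one_zpow, one_mul, abs_of_nonneg (ha n)]
  have hs' : Summable fun n ↦ (-1 : ℝ) ^ n * a n :=
    hs.of_norm_bounded fun n ↦ (habs n).le
  have hle := (hs'.add hs).le_tsum 0 fun n _ ↦ by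
    linarith [neg_abs_le ((-1 : ℝ) ^ n * a n), habs n]
  rw [hs'.tsum_add hs] at hle
  simp only [zpow_zero, one_mul] at hle
  linarith

lemma intervalIntegral_tsum_neg_one_zpow_mul_comp_add_mul {f : ℝ → ℝ} (hf : Integrable f)
    (hf0 : 0 ≤ f) {p : ℝ} (hp : 0 < p) (a : ℝ) :
    ∫ x in a..a + p, ∑' n : ℤ, (-1) ^ n * f (x + n * p)
      = ∑' n : ℤ, (-1) ^ n * ∫ x in a..a + p, f (x + n * p) := by
  have hsum := (hf.hasSum_intervalIntegral_comp_add_mul hp a).summable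
  simp only [intervalIntegral.integral_of_le (by linarith : a ≤ a + p)] at hsum ⊢
  rw [← integral_tsum_of_summable_integral_norm]
  · simp only [integral_const_mul]
  · exact fun n ↦ ((hf.comp_add_right _).restrict).const_mul _
  · simpa only [norm_mul, norm_eq_abs, abs_neg_one_zpow, one_mul, abs_of_nonneg (hf0 _)] using hsum

lemma two_mul_intervalIntegral_sub_integral_le {f : ℝ → ℝ} (hf : Integrable f) (hf0 : 0 ≤ f)
    {p : ℝ} (hp : 0 < p) (a : ℝ) :
    2 * (∫ x in a..a + p, f x) - ∫ x, f x
      ≤ ∫ x in a..a + p, ∑' n : ℤ, (-1) ^ n * f (x + n * p) := by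
  have hsum := hf.hasSum_intervalIntegral_comp_add_mul hp a
  rw [intervalIntegral_tsum_neg_one_zpow_mul_comp_add_mul hf hf0 hp, ← hsum.tsum_eq]
  simpa using two_mul_sub_tsum_le_tsum_neg_one_zpow_mul
    (fun n ↦ intervalIntegral.integral_nonneg (by linarith) fun x _ ↦ hf0 _) hsum.summable

namespace ProbabilityTheory

lemma hasSubgaussianMGF_sub_gaussianReal (m : ℝ) (v : ℝ≥0) :
    HasSubgaussianMGF (fun y ↦ y - m) v (gaussianReal m v) := by
  rw [← HasSubgaussianMGF.id_map_iff (by fun_prop), gaussianReal_map_sub_const, sub_self]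
  exact ⟨integrable_exp_mul_gaussianReal, fun t ↦ by simp [mgf_id_gaussianReal]⟩

lemma gaussianReal_real_abs_sub_ge_le (m : ℝ) (v : ℝ≥0) {r : ℝ} (hr : 0 ≤ r) :
    (gaussianReal m v).real {y | r ≤ |y - m|} ≤ 2 * exp (-r ^ 2 / (2 * v)) := by
  have h := hasSubgaussianMGF_sub_gaussianReal m v
  have hsplit : {y | r ≤ |y - m|} = {y | r ≤ y - m} ∪ {y | r ≤ (-fun y ↦ y - m) y} := by
    ext y
    simp only [mem_ofPred_eq, mem_union, Pi.neg_apply, le_abs, neg_sub]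
  calc (gaussianReal m v).real {y | r ≤ |y - m|}
      ≤ (gaussianReal m v).real {y | r ≤ y - m}
        + (gaussianReal m v).real {y | r ≤ (-fun y ↦ y - m) y} :=
        hsplit ▸ measureReal_union_le _ _
    _ ≤ 2 * exp (-r ^ 2 / (2 * v)) := by
        linarith [h.measure_ge_le hr, h.neg.measure_ge_le hr]

lemma one_sub_two_mul_exp_le_integral_gaussianPDFReal {m L r : ℝ} {v : ℝ≥0} (hv : v ≠ 0)
    (hr : 0 ≤ r) (hmL : |m| + r ≤ L) :
    1 - 2 * exp (-r ^ 2 / (2 * v)) ≤ ∫ y in -L..L, gaussianPDFReal m v y := by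
  have hreal : (gaussianReal m v).real (Ioc (-L) L) = ∫ y in -L..L, gaussianPDFReal m v y := by
    rw [intervalIntegral.integral_of_le (by linarith [abs_nonneg m]), measureReal_def,
      gaussianReal_apply_eq_integral _ hv, ENNReal.toReal_ofReal
        (setIntegral_nonneg measurableSet_Ioc fun y _ ↦ gaussianPDFReal_nonneg m v y)]
  have hfar : (Ioc (-L) L)ᶜ ⊆ {y | r ≤ |y - m|} := by
    intro y hy
    show r ≤ |y - m|
    by_contra! hnear
    have : |y| < L := by linarith [abs_sub_abs_le_abs_sub y m]
    exact hy ⟨(abs_lt.mp this).1, (abs_lt.mp this).2.le⟩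
  rw [← hreal]
  linarith [probReal_compl_eq_one_sub (μ := gaussianReal m v) (measurableSet_Ioc (a := -L) (b := L)),
    measureReal_mono (μ := gaussianReal m v) hfar, gaussianReal_real_abs_sub_ge_le m v hr]

end ProbabilityTheory

lemma heatKernel_sub_eq_gaussianPDFReal {d t : ℝ} (hdt : 0 ≤ d * t) (x y : ℝ) :
    heatKernel d t (x - y) = gaussianPDFReal x (2 * d * t).toNNReal y := by
  rw [heatKernel, gaussianPDFReal, Real.coe_toNNReal _ (by linarith)]
  congr 3 <;> ring

lemma exp_neg_le_inv_sqrt_pi_mul_exp_neg_half {M : ℝ} (hM : 2 ≤ M) :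
    exp (-M) ≤ (√π)⁻¹ * exp (-(M / 2)) := by
  have hsqrt_pi : √π ≤ 2 := by
    rw [sqrt_le_left (by norm_num)]
    linarith [pi_le_four]
  have he : exp (-1) ≤ (√π)⁻¹ := by
    rw [exp_neg]
    refine inv_anti₀ (sqrt_pos.mpr pi_pos) (hsqrt_pi.trans ?_)
    linarith [add_one_le_exp (1 : ℝ)]
  calc exp (-M) = exp (-(M / 2)) * exp (-(M / 2)) := by rw [← exp_add]; ring_nf
    _ ≤ exp (-1) * exp (-(M / 2)) := by gcongr; linarith
    _ ≤ (√π)⁻¹ * exp (-(M / 2)) := by gcongr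

lemma exp_neg_sq_div_le_inv_sqrt_pi_mul_exp {d s ε L : ℝ} (hd : 0 < d) (hs : 0 < s) (hL0 : 0 < L)
    (hL : 2 * √d ≤ L) (hsL : s ≤ ε ^ 2 * L / (4 * √d)) :
    exp (-(ε * L) ^ 2 / (2 * (2 * d * s))) ≤ (√π)⁻¹ * exp (-L / (2 * √d)) := by
  have hsqrt_d : 0 < √d := sqrt_pos.mpr hd
  have hexponent : L / √d ≤ (ε * L) ^ 2 / (2 * (2 * d * s)) := by
    rw [div_le_div_iff₀ hsqrt_d (by positivity)]
    have := (le_div_iff₀ (by positivity)).mp hsL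
    linear_combination (L * √d) * this - 4 * L * s * mul_self_sqrt hd.le
  calc exp (-(ε * L) ^ 2 / (2 * (2 * d * s))) ≤ exp (-(L / √d)) := by
        rw [neg_div]
        exact exp_le_exp.mpr (neg_le_neg hexponent)
    _ ≤ (√π)⁻¹ * exp (-(L / √d / 2)) :=
        exp_neg_le_inv_sqrt_pi_mul_exp_neg_half ((le_div_iff₀ hsqrt_d).mpr hL)
    _ = (√π)⁻¹ * exp (-L / (2 * √d)) := by ring_nf

/-- Quantitative lower bound on the Dirichlet heat-semigroup mass given by the
image-series Green function on `(−L, L)`. -/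
theorem stmt7 (d : ℝ) (hd : 0 < d) :
    ∀ ε1 ∈ Set.Ioo (0:ℝ) 1, ∃ T0 ≥ (1:ℝ), ∀ L, T0 ≤ L → ∀ t τ x : ℝ,
      0 < t - τ → t - τ ≤ ε1 ^ 2 * L / (4 * Real.sqrt d) → |x| ≤ (1 - ε1) * L →
      (∫ ξ in (-L)..L, ∑' n : ℤ,
          ((-1 : ℝ) ^ n) * heatKernel d (t - τ) (x - ξ - 2 * (n : ℝ) * L))
        ≥ 1 - (4 / Real.sqrt Real.pi) * Real.exp (-L / (2 * Real.sqrt d)) := by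
  rintro ε1 ⟨hε1, -⟩
  refine ⟨max 1 (2 * √d), le_max_left _ _, fun L hL t τ x hs hsL hx ↦ ?_⟩
  have hL0 : 0 < L := one_pos.trans_le (le_of_max_le_left hL)
  set v := (2 * d * (t - τ)).toNNReal
  have hv_coe : (v : ℝ) = 2 * d * (t - τ) := Real.coe_toNNReal _ (by positivity)
  have hv : v ≠ 0 := by rw [← NNReal.coe_ne_zero, hv_coe]; positivity
  have hkernel : ∀ ξ (n : ℤ), heatKernel d (t - τ) (x - ξ - 2 * n * L)
      = gaussianPDFReal x v (ξ + n * (2 * L)) := fun ξ n ↦ by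
    rw [← heatKernel_sub_eq_gaussianPDFReal (by positivity)]
    ring_nf
  have himages := two_mul_intervalIntegral_sub_integral_le (integrable_gaussianPDFReal x v)
    (gaussianPDFReal_nonneg x v) (by positivity : 0 < 2 * L) (-L)
  rw [show -L + 2 * L = L by ring, integral_gaussianPDFReal_eq_one x hv] at himages
  have hcell := one_sub_two_mul_exp_le_integral_gaussianPDFReal hv (m := x) (L := L)
    (by positivity : 0 ≤ ε1 * L) (by linarith)
  have htail := exp_neg_sq_div_le_inv_sqrt_pi_mul_exp hd hs hL0 (le_of_max_le_right hL) hsL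
  rw [← hv_coe] at htail
  simp only [hkernel, ge_iff_le]
  calc 1 - 4 / √π * exp (-L / (2 * √d)) = 1 - 4 * ((√π)⁻¹ * exp (-L / (2 * √d))) := by ring
    _ ≤ 1 - 4 * exp (-(ε1 * L) ^ 2 / (2 * v)) := by linarith
    _ ≤ 2 * (∫ y in -L..L, gaussianPDFReal x v y) - 1 := by linarith
    _ ≤ _ := himages
end

section
/- Suppose u, v : [0,∞) × [0,∞) → ℝ solve the cooperative system u_t = d1 u_{xx} − a u + H(v), v_t = d2 v_{xx} − b v + G(u) with H, G increasing, and suppose there exist constants M1, M2, δ > 0 with u* + M1 ≥ sup u(0,·), v* + M2 ≥ sup v(0,·), b/G'(u*) > M1/M2 > H'(v*)/a, and δ ≤ min{ (a M1 − H'(v*) M2)/M1, (b M2 − G'(u*) M1)/M2 }, where (u*, v*) is the positive equilibrium and H, G are concave with H(0)=G(0)=0. Then (ū, v̄)(t) = (u* + M1 e^{−δt}, v* + M2 e^{−δt}) is a (spatially constant) upper solution, i.e. ū_t ≥ −a ū + H(v̄) and v̄_t ≥ −b v̄ + G(ū) for all t ≥ 0. -/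
lemma tangent_le (f f' : ℝ → ℝ) (hf : ConcaveOn ℝ (Set.Ici 0) f)
    (hd : ∀ x, HasDerivAt f (f' x) x) {x y : ℝ} (hx : 0 ≤ x) (hxy : x < y) :
    f y ≤ f x + f' x * (y - x) := by
  have hy : (0:ℝ) ≤ y := hx.trans hxy.le
  have h := hf.slope_le_of_hasDerivAt (Set.mem_Ici.2 hx) (Set.mem_Ici.2 hy) hxy (hd x)
  rw [slope_def_field] at h
  have hpos : 0 < y - x := sub_pos.2 hxy
  rw [div_le_iff₀ hpos] at h
  linarith

/-- `(u* + M1 e^{−δt}, v* + M2 e^{−δt})` is a spatially constant upper solution for the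
cooperative reaction system, under the stated conditions on `M1, M2, δ`. -/
theorem stmt8 (d1 d2 a b ustar vstar M1 M2 δ : ℝ)
    (H H' G G' : ℝ → ℝ) (u v ut uxx vt vxx : ℝ → ℝ → ℝ)
    (ha : 0 < a) (hb : 0 < b) (hu : 0 < ustar) (hv : 0 < vstar)
    (hM1 : 0 < M1) (hM2 : 0 < M2) (hδpos : 0 < δ)
    (hH0 : H 0 = 0) (hG0 : G 0 = 0)
    (hHd : ∀ x, HasDerivAt H (H' x) x) (hGd : ∀ x, HasDerivAt G (G' x) x)
    (hH'pos : ∀ x, 0 ≤ x → 0 < H' x) (hG'pos : ∀ x, 0 ≤ x → 0 < G' x)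
    (hHconc : StrictConcaveOn ℝ (Set.Ici 0) H)
    (hGconc : StrictConcaveOn ℝ (Set.Ici 0) G)
    (heq1 : a * ustar = H vstar) (heq2 : b * vstar = G ustar)
    (hpde1 : ∀ t x : ℝ, 0 ≤ t → 0 ≤ x →
      ut t x = d1 * uxx t x - a * u t x + H (v t x))
    (hpde2 : ∀ t x : ℝ, 0 ≤ t → 0 ≤ x →
      vt t x = d2 * vxx t x - b * v t x + G (u t x))
    (hinit1 : ∀ x, 0 ≤ x → u 0 x ≤ ustar + M1)
    (hinit2 : ∀ x, 0 ≤ x → v 0 x ≤ vstar + M2)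
    (hratio1 : M1 / M2 < b / G' ustar) (hratio2 : H' vstar / a < M1 / M2)
    (hδ : δ ≤ min ((a * M1 - H' vstar * M2) / M1) ((b * M2 - G' ustar * M1) / M2)) :
    ∀ t, 0 ≤ t →
      deriv (fun s => ustar + M1 * Real.exp (-δ * s)) t ≥
        -a * (ustar + M1 * Real.exp (-δ * t)) + H (vstar + M2 * Real.exp (-δ * t)) ∧
      deriv (fun s => vstar + M2 * Real.exp (-δ * s)) t ≥
        -b * (vstar + M2 * Real.exp (-δ * t)) + G (ustar + M1 * Real.exp (-δ * t)) := by
  intro t ht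
  set e := Real.exp (-δ * t) with he
  have hepos : 0 < e := Real.exp_pos _
  have hexp : HasDerivAt (fun s => Real.exp (-δ * s)) (Real.exp (-δ * t) * (-δ * 1)) t :=
    ((hasDerivAt_id t).const_mul (-δ)).exp
  have hd1 : HasDerivAt (fun s => ustar + M1 * Real.exp (-δ * s)) (M1 * (e * (-δ * 1))) t :=
    (hexp.const_mul M1).const_add ustar
  have hd2 : HasDerivAt (fun s => vstar + M2 * Real.exp (-δ * s)) (M2 * (e * (-δ * 1))) t :=
    (hexp.const_mul M2).const_add vstar
  have hδ1 : δ * M1 ≤ a * M1 - H' vstar * M2 := by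
    have := (le_min_iff.mp hδ).1
    rw [le_div_iff₀ hM1] at this; linarith
  have hδ2 : δ * M2 ≤ b * M2 - G' ustar * M1 := by
    have := (le_min_iff.mp hδ).2
    rw [le_div_iff₀ hM2] at this; linarith
  have hHle : H (vstar + M2 * e) ≤ H vstar + H' vstar * (M2 * e) := by
    have := tangent_le H H' hHconc.concaveOn hHd hv.le
      (show vstar < vstar + M2 * e by nlinarith)
    simpa using this
  have hGle : G (ustar + M1 * e) ≤ G ustar + G' ustar * (M1 * e) := by
    have := tangent_le G G' hGconc.concaveOn hGd hu.le
      (show ustar < ustar + M1 * e by nlinarith)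
    simpa using this
  constructor
  · rw [hd1.deriv]
    nlinarith [hepos]
  · rw [hd2.deriv]
    nlinarith [hepos]
end

section
/- Let φ : [0,∞) → ℝ be C², strictly increasing, bounded, with φ(0) = 0, φ'(0) > 0, φ'' bounded, and φ'(x) → 0 as x → ∞. For h ≥ 1 and x ∈ [0, h], define f(h, x) = φ(h − x) + φ(h + x) − φ(2h). Then there exist L ≥ 1 and η > 0, depending only on φ, such that for all h ≥ L: (i) ∂_x f(h, x) < −φ'(0)/4 for x ∈ [h − η, h]; (ii) f(h, x) ≥ 0 for all x ∈ [0, h]. -/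
/-!
Near `x = h` the derivative `-φ'(h - x) + φ'(h + x)` is close to `-φ'(0)`: the first term by
continuity of `φ'` at `0`, the second because `φ' → 0`. So `x ↦ f(h, x)` decreases to
`f(h, h) = 0` on `[h - η, h]`. On `[0, h - η]` monotonicity gives `φ(h - x) ≥ φ(η) > 0`, while
`φ(2h) - φ(h + x)` is eventually below `φ(η)` because the bounded monotone `φ` converges.
-/

open Set Filter Topology

lemma MonotoneOn.exists_forall_sub_lt_of_bddAbove {φ : ℝ → ℝ} {a ε : ℝ}
    (hmono : MonotoneOn φ (Ici a)) (hbdd : BddAbove (φ '' Ici a)) (hε : 0 < ε) :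
    ∃ y ≥ a, ∀ s t, y ≤ s → s ≤ t → φ t - φ s < ε := by
  obtain ⟨_, ⟨y, hy, rfl⟩, hyS⟩ :=
    exists_lt_of_lt_csSup (nonempty_Ici.image φ) (sub_lt_self (sSup (φ '' Ici a)) hε)
  refine ⟨y, hy, fun s t hys hst => ?_⟩
  have hφs : φ y ≤ φ s := hmono hy (hy.trans hys) hys
  have hφt : φ t ≤ sSup (φ '' Ici a) :=
    le_csSup hbdd (mem_image_of_mem φ (hy.trans (hys.trans hst)))
  linarith

lemma hasDerivAt_comp_const_sub_add_comp_const_add {φ φ' : ℝ → ℝ}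
    (hφd : ∀ x, 0 ≤ x → HasDerivAt φ (φ' x) x) {h t : ℝ} (hth : t ≤ h) (hht : -h ≤ t) :
    HasDerivAt (fun s => φ (h - s) + φ (h + s)) (-φ' (h - t) + φ' (h + t)) t := by
  have hsub : HasDerivAt (fun s => φ (h - s)) (φ' (h - t) * -1) t :=
    (hφd (h - t) (by linarith)).comp t ((hasDerivAt_id t).const_sub h)
  have hadd : HasDerivAt (fun s => φ (h + s)) (φ' (h + t) * 1) t :=
    (hφd (h + t) (by linarith)).comp t ((hasDerivAt_id t).const_add h)
  exact (hsub.add hadd).congr_deriv (by ring)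

lemma le_comp_const_sub_add_comp_const_add_of_deriv_nonpos {φ φ' : ℝ → ℝ}
    (hφd : ∀ x, 0 ≤ x → HasDerivAt φ (φ' x) x) (hφ0 : φ 0 = 0) {a h x : ℝ} (ha : 0 ≤ a)
    (hderiv : ∀ t ∈ Ioo a h, -φ' (h - t) + φ' (h + t) ≤ 0) (hx : x ∈ Icc a h) :
    φ (2 * h) ≤ φ (h - x) + φ (h + x) := by
  have hd : ∀ t ∈ Icc a h, HasDerivAt (fun s => φ (h - s) + φ (h + s))
      (-φ' (h - t) + φ' (h + t)) t := fun t ht =>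
    hasDerivAt_comp_const_sub_add_comp_const_add hφd ht.2 (by linarith [ht.1, ht.2])
  have hanti : AntitoneOn (fun s => φ (h - s) + φ (h + s)) (Icc a h) := by
    refine antitoneOn_of_hasDerivWithinAt_nonpos (f' := fun t => -φ' (h - t) + φ' (h + t))
      (convex_Icc a h) (fun t ht => (hd t ht).continuousAt.continuousWithinAt) (fun t ht => ?_) ?_
    · rw [interior_Icc] at ht
      exact (hd t (Ioo_subset_Icc_self ht)).hasDerivWithinAt
    · simpa only [interior_Icc] using hderiv
  have := hanti hx ⟨hx.1.trans hx.2, le_rfl⟩ hx.2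
  simpa [hφ0, two_mul] using this

theorem stmt9_general (φ φ' φ'' : ℝ → ℝ)
    (hφd : ∀ x, 0 ≤ x → HasDerivAt φ (φ' x) x)
    (hφd2 : ∀ x, 0 ≤ x → HasDerivAt φ' (φ'' x) x)
    (hmono : StrictMonoOn φ (Set.Ici 0))
    (hbdd : ∃ B, ∀ x, 0 ≤ x → φ x ≤ B)
    (hφ0 : φ 0 = 0) (hφ'0 : 0 < φ' 0)
    (hlim : Filter.Tendsto φ' Filter.atTop (nhds 0)) :
    ∃ L ≥ (1:ℝ), ∃ η > 0, ∀ h, L ≤ h →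
      (∀ x, h - η ≤ x → x ≤ h → -φ' (h - x) + φ' (h + x) < -(φ' 0) / 4) ∧
      (∀ x, 0 ≤ x → x ≤ h → 0 ≤ φ (h - x) + φ (h + x) - φ (2 * h)) := by
  obtain ⟨η, hη, hnear⟩ := mem_nhdsGE_iff_exists_Icc_subset.1 <| nhdsWithin_le_nhds <|
    (hφd2 0 le_rfl).continuousAt.tendsto.eventually_const_lt (half_lt_self hφ'0)
  obtain ⟨N, htail⟩ := eventually_atTop.1 (hlim.eventually_lt_const (by linarith : 0 < φ' 0 / 4))
  have hbdd' : BddAbove (φ '' Ici 0) := by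
    obtain ⟨B, hB⟩ := hbdd
    exact ⟨B, by rintro _ ⟨x, hx, rfl⟩; exact hB x hx⟩
  have hφη : 0 < φ η := hφ0 ▸ hmono (mem_Ici.2 le_rfl) hη.le hη
  obtain ⟨y, -, hconv⟩ :=
    hmono.monotoneOn.exists_forall_sub_lt_of_bddAbove hbdd' hφη
  have hderiv : ∀ h, η ⊔ N ≤ h → ∀ x, h - η ≤ x → x ≤ h →
      -φ' (h - x) + φ' (h + x) < -(φ' 0) / 4 := fun h hh x hx₁ hx₂ => by
    have h₁ : φ' 0 / 2 < φ' (h - x) := hnear ⟨by linarith, by linarith⟩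
    have h₂ : φ' (h + x) < φ' 0 / 4 :=
      htail _ (by linarith [le_sup_left.trans hh, le_sup_right.trans hh])
    linarith
  refine ⟨1 ⊔ (η ⊔ N) ⊔ y, le_sup_left.trans le_sup_left, η, hη, fun h hh => ?_⟩
  have hηN : η ⊔ N ≤ h := le_sup_right.trans (le_sup_left.trans hh)
  have hyh : y ≤ h := le_sup_right.trans hh
  have hηh : η ≤ h := le_sup_left.trans hηN
  refine ⟨hderiv h hηN, fun x hx₀ hxh => ?_⟩
  rcases le_or_gt x (h - η) with hbulk | hedge
  · have h₁ : φ η ≤ φ (h - x) :=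
      hmono.monotoneOn hη.le (show (0:ℝ) ≤ h - x by linarith) (by linarith)
    have h₂ : φ (2 * h) - φ (h + x) < φ η := hconv _ _ (by linarith) (by linarith)
    linarith
  · have := le_comp_const_sub_add_comp_const_add_of_deriv_nonpos hφd hφ0 (sub_nonneg.2 hηh)
      (fun t ht => (hderiv h hηN t ht.1.le ht.2.le).le.trans (by linarith)) ⟨hedge.le, hxh⟩
    linarith

/-- The reflected lower-solution profile `f(h,x) = φ(h−x) + φ(h+x) − φ(2h)` is nonnegative
on `[0,h]` for `h` large, with `∂ₓ f(h,x) < −φ'(0)/4` near `x = h`. -/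
theorem stmt9 (φ φ' φ'' : ℝ → ℝ)
    (hφd : ∀ x, 0 ≤ x → HasDerivAt φ (φ' x) x)
    (hφd2 : ∀ x, 0 ≤ x → HasDerivAt φ' (φ'' x) x)
    (hmono : StrictMonoOn φ (Set.Ici 0))
    (hbdd : ∃ B, ∀ x, 0 ≤ x → φ x ≤ B)
    (hφ0 : φ 0 = 0) (hφ'0 : 0 < φ' 0)
    (hφ''bdd : ∃ B, ∀ x, 0 ≤ x → |φ'' x| ≤ B)
    (hlim : Filter.Tendsto φ' Filter.atTop (nhds 0)) :
    ∃ L ≥ (1:ℝ), ∃ η > 0, ∀ h, L ≤ h →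
      (∀ x, h - η ≤ x → x ≤ h → -φ' (h - x) + φ' (h + x) < -(φ' 0) / 4) ∧
      (∀ x, 0 ≤ x → x ≤ h → 0 ≤ φ (h - x) + φ (h + x) - φ (2 * h)) :=
  stmt9_general φ φ' φ'' hφd hφd2 hmono hbdd hφ0 hφ'0 hlim
end

section
/- Let ψ be C¹ and strictly increasing on [0,∞) with 0 < ψ(x) < v* for x > 0, and let H be strictly concave, increasing with H(0)=0. Fix s ≥ 1 and ε(t) = ε e^{−σ(t−T)} ∈ (0,1). Then (1 − ε(t)) H(ψ(s)) − H((1 − ε(t)) ψ(s)) ≤ (1 − ε(t)) ε(t) ψ(s)² C_ψ, where C_ψ = max_{z ∈ [ψ(1)/2, v*]} (H(z)/z)' < 0, provided (1 − ε(t)) ψ(s) ≥ ψ(1)/2. -/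
/-!
With `g y = H y / y` one has `(1 - e) H(x) - H((1 - e) x) = (1 - e) x (g x - g ((1 - e) x))`, so the
mean value theorem gives the bound with any upper bound of `g'` on `[(1 - e) x, x]`.
Since `g' z = -(H z - z H' z) / z²`, the supremum of `g'` over `[a, b]`, `a > 0`, is negative:
for concave `H` the map `z ↦ H z - z H' z` is nondecreasing on `[0, ∞)`, and it is positive at `a`
because, by strict concavity, `H 0 = 0` lies strictly below the tangent line at `a`.
-/

open Set

theorem ConcaveOn.sub_mul_le_sub_mul_of_hasDerivAt {S : Set ℝ} {f : ℝ → ℝ} {x y f'x f'y : ℝ}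
    (hf : ConcaveOn ℝ S f) (hx : x ∈ S) (hy : y ∈ S) (hx0 : 0 ≤ x) (hxy : x ≤ y)
    (hfx : HasDerivAt f f'x x) (hfy : HasDerivAt f f'y y) :
    f x - x * f'x ≤ f y - y * f'y := by
  rcases hxy.eq_or_lt with rfl | hxy
  · rw [hfx.unique hfy]
  have hle_slope : f'y ≤ slope f x y := hf.le_slope_of_hasDerivAt hx hy hxy hfy
  have hanti : f'y ≤ f'x := hle_slope.trans (hf.slope_le_of_hasDerivAt hx hy hxy hfx)
  rw [slope_def_field, le_div_iff₀ (sub_pos.mpr hxy)] at hle_slope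
  nlinarith [mul_le_mul_of_nonneg_left hanti hx0]

theorem StrictConcaveOn.mul_lt_of_hasDerivAt_of_map_zero {f : ℝ → ℝ} {x f'x : ℝ}
    (hf : StrictConcaveOn ℝ (Ici 0) f) (hf0 : f 0 = 0) (hx : 0 < x) (hfx : HasDerivAt f f'x x) :
    x * f'x < f x := by
  have h := hf.lt_slope_of_hasDerivAt self_mem_Ici hx.le hx hfx
  rwa [slope_def_field, hf0, sub_zero, sub_zero, lt_div_iff₀ hx, mul_comm] at h

section QuotientByIdentity

variable {f f' : ℝ → ℝ} {a b : ℝ}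

theorem hasDerivAt_div_id {x f'x : ℝ} (hfx : HasDerivAt f f'x x) (hx : x ≠ 0) :
    HasDerivAt (fun y => f y / y) ((f'x * x - f x) / x ^ 2) x := by
  simpa using hfx.fun_div (hasDerivAt_id' x) hx

variable (hf : StrictConcaveOn ℝ (Ici 0) f) (hf0 : f 0 = 0)
  (hf' : ∀ x, 0 < x → HasDerivAt f (f' x) x)
include hf hf0 hf'

theorem deriv_div_id_le_of_strictConcaveOn (ha : 0 < a) {z : ℝ} (hz : z ∈ Icc a b) :
    deriv (fun y => f y / y) z ≤ -(f a - a * f' a) / b ^ 2 := by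
  have hz0 : 0 < z := ha.trans_le hz.1
  have hgap : 0 < f a - a * f' a :=
    sub_pos.mpr (hf.mul_lt_of_hasDerivAt_of_map_zero hf0 ha (hf' a ha))
  have hmono : f a - a * f' a ≤ f z - z * f' z :=
    hf.concaveOn.sub_mul_le_sub_mul_of_hasDerivAt (mem_Ici.mpr ha.le) (mem_Ici.mpr hz0.le)
      ha.le hz.1 (hf' a ha) (hf' z hz0)
  have hzb : z ^ 2 ≤ b ^ 2 := pow_le_pow_left₀ hz0.le hz.2 2
  rw [(hasDerivAt_div_id (hf' z hz0) hz0.ne').deriv]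
  calc (f' z * z - f z) / z ^ 2 = -(f z - z * f' z) / z ^ 2 := by ring
    _ ≤ -(f a - a * f' a) / z ^ 2 := by gcongr
    _ ≤ -(f a - a * f' a) / b ^ 2 := by
      rw [neg_div, neg_div, neg_le_neg_iff]
      gcongr

theorem bddAbove_deriv_div_id_of_strictConcaveOn (ha : 0 < a) :
    BddAbove (deriv (fun y => f y / y) '' Icc a b) :=
  ⟨_, forall_mem_image.mpr fun _ hz => deriv_div_id_le_of_strictConcaveOn hf hf0 hf' ha hz⟩

theorem sSup_deriv_div_id_neg_of_strictConcaveOn (ha : 0 < a) (hab : a ≤ b) :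
    sSup (deriv (fun y => f y / y) '' Icc a b) < 0 := by
  have hgap : 0 < f a - a * f' a :=
    sub_pos.mpr (hf.mul_lt_of_hasDerivAt_of_map_zero hf0 ha (hf' a ha))
  have hb : 0 < b := ha.trans_le hab
  calc sSup (deriv (fun y => f y / y) '' Icc a b) ≤ -(f a - a * f' a) / b ^ 2 :=
        csSup_le ((nonempty_Icc.mpr hab).image _)
          (forall_mem_image.mpr fun _ hz => deriv_div_id_le_of_strictConcaveOn hf hf0 hf' ha hz)
    _ < 0 := div_neg_of_neg_of_pos (neg_neg_of_pos hgap) (by positivity)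

end QuotientByIdentity

theorem one_sub_mul_sub_le_of_deriv_div_id_le {f : ℝ → ℝ} {x e C : ℝ}
    (hf : ∀ y, 0 < y → DifferentiableAt ℝ f y) (hx : 0 < x) (he : e ∈ Ico 0 1)
    (hC : ∀ z ∈ Ioo ((1 - e) * x) x, deriv (fun y => f y / y) z ≤ C) :
    (1 - e) * f x - f ((1 - e) * x) ≤ (1 - e) * e * x ^ 2 * C := by
  obtain ⟨he0, he1⟩ := he
  set a := (1 - e) * x
  have ha : 0 < a := mul_pos (sub_pos.mpr he1) hx
  have hdiff : ∀ y ∈ Icc a x, DifferentiableAt ℝ (fun y => f y / y) y := fun y hy =>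
    (hf y (ha.trans_le hy.1)).div differentiableAt_id (ha.trans_le hy.1).ne'
  have hmvt : f x / x - f a / a ≤ C * (x - a) :=
    (convex_Icc a x).image_sub_le_mul_sub_of_deriv_le
      (fun y hy => (hdiff y hy).continuousAt.continuousWithinAt)
      (fun y hy => (hdiff y (interior_subset hy)).differentiableWithinAt)
      (by rwa [interior_Icc]) a (left_mem_Icc.mpr (by nlinarith)) x
      (right_mem_Icc.mpr (by nlinarith)) (by nlinarith)
  calc (1 - e) * f x - f a = a * (f x / x - f a / a) := by
        field_simp
        ring
    _ ≤ a * (C * (x - a)) := mul_le_mul_of_nonneg_left hmvt ha.le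
    _ = (1 - e) * e * x ^ 2 * C := by ring

theorem stmt19_general (vstar s e : ℝ) (H H' ψ : ℝ → ℝ)
    (hψrange : ∀ x, 0 < x → 0 < ψ x ∧ ψ x < vstar)
    (hHd : ∀ x, HasDerivAt H (H' x) x)
    (hH0 : H 0 = 0)
    (hHconc : StrictConcaveOn ℝ (Set.Ici 0) H)
    (hs : 1 ≤ s) (he : e ∈ Set.Ioo (0:ℝ) 1)
    (hlb : ψ 1 / 2 ≤ (1 - e) * ψ s) :
    sSup ((fun z => deriv (fun y => H y / y) z) '' Set.Icc (ψ 1 / 2) vstar) < 0 ∧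
      (1 - e) * H (ψ s) - H ((1 - e) * ψ s) ≤
        (1 - e) * e * (ψ s) ^ 2 *
          sSup ((fun z => deriv (fun y => H y / y) z) '' Set.Icc (ψ 1 / 2) vstar) := by
  obtain ⟨hψ1, hψ1v⟩ := hψrange 1 one_pos
  obtain ⟨hψs, hψsv⟩ := hψrange s (by linarith)
  have hHd' : ∀ x, 0 < x → HasDerivAt H (H' x) x := fun x _ => hHd x
  have ha : 0 < ψ 1 / 2 := half_pos hψ1
  refine ⟨sSup_deriv_div_id_neg_of_strictConcaveOn hHconc hH0 hHd' ha (by linarith), ?_⟩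
  refine one_sub_mul_sub_le_of_deriv_div_id_le (fun y _ => (hHd y).differentiableAt) hψs
    (Ioo_subset_Ico_self he) fun z hz => le_csSup ?_ ?_
  · exact bddAbove_deriv_div_id_of_strictConcaveOn hHconc hH0 hHd' ha
  · exact mem_image_of_mem _ ⟨hlb.trans hz.1.le, hz.2.le.trans hψsv.le⟩

/-- Concavity estimate for the lower solution of Lemma 3.2: with
`C_ψ = max_{z ∈ [ψ(1)/2, v*]} (H(z)/z)' < 0`, for `s ≥ 1` and `e ∈ (0,1)` with
`(1−e)ψ(s) ≥ ψ(1)/2`, one has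
`(1−e) H(ψ(s)) − H((1−e)ψ(s)) ≤ (1−e) e ψ(s)² C_ψ`. -/
theorem stmt19 (vstar s e : ℝ) (H H' ψ ψ' : ℝ → ℝ)
    (hv : 0 < vstar)
    (hψd : ∀ x, 0 ≤ x → HasDerivAt ψ (ψ' x) x)
    (hψmono : StrictMonoOn ψ (Set.Ici 0))
    (hψrange : ∀ x, 0 < x → 0 < ψ x ∧ ψ x < vstar)
    (hHd : ∀ x, HasDerivAt H (H' x) x)
    (hH0 : H 0 = 0)
    (hHmono : StrictMonoOn H (Set.Ici 0))
    (hHconc : StrictConcaveOn ℝ (Set.Ici 0) H)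
    (hHC2 : ContDiffOn ℝ 2 H (Set.Ici 0))
    (hs : 1 ≤ s) (he : e ∈ Set.Ioo (0:ℝ) 1)
    (hlb : ψ 1 / 2 ≤ (1 - e) * ψ s) :
    sSup ((fun z => deriv (fun y => H y / y) z) '' Set.Icc (ψ 1 / 2) vstar) < 0 ∧
      (1 - e) * H (ψ s) - H ((1 - e) * ψ s) ≤
        (1 - e) * e * (ψ s) ^ 2 *
          sSup ((fun z => deriv (fun y => H y / y) z) '' Set.Icc (ψ 1 / 2) vstar) :=
  stmt19_general vstar s e H H' ψ hψrange hHd hH0 hHconc hs he hlb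
end
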